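/- For nested communities ω' ⊂ ω ⊂ N, the global EP rate satisfies ⟨σ̇⟩ ≥ d^ω S^{X|X_ω}/dt + d^{ω'} S^{X_ω|X_{ω'}}/dt, the sum of two non-negative windowed conditional-entropy derivatives. -/

import Mathlib

open Finset

section Helpers

lemma aux_log_ineq (u v : ℝ) (hu : 0 < u) (hv : 0 < v) :
    u - v ≤ u * Real.log (u / v) := by
  have h := Real.log_le_sub_one_of_pos (show 0 < v / u by positivity)
  have h2 : Real.log (u / v) = - Real.log (v / u) := by
    rw [← Real.log_inv]; congr 1; field_simp
  rw [h2]
  have h3 : u * Real.log (v / u) ≤ u * (v / u - 1) :=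
    mul_le_mul_of_nonneg_left h hu.le
  have h4 : u * (v / u - 1) = v - u := by field_simp
  nlinarith

lemma core1 (k k' q q' g g' : ℝ) (hk : 0 ≤ k) (hk' : 0 ≤ k')
    (hiff : 0 < k → 0 < k') (hq : 0 < q) (hq' : 0 < q')
    (hg : 0 < g) (hg' : 0 < g') :
    k * q' - k' * q * (g' / g) ≤
      k * q' * Real.log (k * q' / (k' * q)) - k * q' * (Real.log g' - Real.log g) := by
  rcases hk.eq_or_lt with h | h
  · rw [← h]; simp; positivity
  · have hk2 := hiff h
    have key := aux_log_ineq (k * q') (k' * q * (g' / g)) (by positivity) (by positivity)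
    have e : Real.log (k * q' / (k' * q * (g' / g)))
        = Real.log (k * q' / (k' * q)) - (Real.log g' - Real.log g) := by
      rw [show k * q' / (k' * q * (g' / g)) = (k * q' / (k' * q)) * (g / g') by
        field_simp]
      rw [Real.log_mul (by positivity) (by positivity), Real.log_div (by positivity) (by positivity),
        Real.log_div hg.ne' hg'.ne']
      ring
    rw [e, mul_sub] at key
    linarith

lemma core2 (k q' g g' : ℝ) (hk : 0 ≤ k) (hq' : 0 < q')
    (hg : 0 < g) (hg' : 0 < g') :
    k * q' - k * q' * (g / g') ≤ k * q' * (Real.log g' - Real.log g) := by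
  rcases hk.eq_or_lt with h | h
  · rw [← h]; ring_nf; simp
  · have key := aux_log_ineq (k * q') (k * q' * (g / g')) (by positivity) (by positivity)
    have e : Real.log (k * q' / (k * q' * (g / g'))) = Real.log g' - Real.log g := by
      rw [show k * q' / (k * q' * (g / g')) = g' / g by field_simp,
        Real.log_div hg'.ne' hg.ne']
    rw [e] at key; linarith


lemma core3 (k k' q q' : ℝ) (hk : 0 ≤ k) (hk' : 0 ≤ k')
    (hiff : 0 < k → 0 < k') (hq : 0 < q) (hq' : 0 < q') :
    k * q' - k' * q ≤ k * q' * Real.log (k * q' / (k' * q)) := by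
  rcases hk.eq_or_lt with h | h
  · rw [← h]; simp; positivity
  · exact aux_log_ineq _ _ (by positivity) (mul_pos (hiff h) hq)

lemma split_diag {ι : Type*} [Fintype ι] [DecidableEq ι] (f : ι → ι → ℝ) :
    ∑ x' : ι, ∑ x : ι, (if x' = x then 0 else f x' x)
      = (∑ x' : ι, ∑ x : ι, f x' x) - ∑ x : ι, f x x := by
  rw [← Finset.sum_sub_distrib]
  congr 1; ext x'
  have h : ∀ x : ι, (if x' = x then 0 else f x' x) = f x' x - (if x' = x then f x' x else 0) := by
    intro x; by_cases h : x' = x <;> simp [h]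
  rw [Finset.sum_congr rfl (fun x _ => h x), Finset.sum_sub_distrib, Finset.sum_ite_eq]
  simp

variable {X1 X2 X3 : Type} [Fintype X1] [Fintype X2] [Fintype X3]
  [DecidableEq X1] [DecidableEq X2] [DecidableEq X3]

lemma SL1 (K1 : X1 → X1 → ℝ) (x' : X1 × X2 × X3) (F : X1 × X2 × X3 → ℝ) :
    ∑ x : X1 × X2 × X3, (if x'.2 = x.2 then K1 x'.1 x.1 else 0) * F x
      = ∑ a, K1 x'.1 a * F (a, x'.2) := by
  rw [Fintype.sum_prod_type]
  refine Finset.sum_congr rfl fun a _ => ?_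
  simp only [ite_mul, zero_mul]
  rw [Finset.sum_ite_eq]
  simp

lemma SL2 (K2 : X1 × X2 → X1 × X2 → ℝ) (x' : X1 × X2 × X3) (F : X1 × X2 × X3 → ℝ) :
    ∑ x : X1 × X2 × X3, (if x'.2.2 = x.2.2 then K2 (x'.1, x'.2.1) (x.1, x.2.1) else 0) * F x
      = ∑ y : X1 × X2, K2 (x'.1, x'.2.1) y * F (y.1, y.2, x'.2.2) := by
  simp only [Fintype.sum_prod_type]
  refine Finset.sum_congr rfl fun a _ => Finset.sum_congr rfl fun b _ => ?_
  simp only [ite_mul, zero_mul]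
  rw [Finset.sum_ite_eq]
  simp

lemma ZL1 (K1 : X1 → X1 → ℝ) (h1row : ∀ a', ∑ a, K1 a' a = 0)
    (Φ : X1 × X2 × X3 → X1 × X2 × X3 → ℝ) (ψ : X1 × X2 × X3 → X1 → ℝ) (w : X1 → ℝ)
    (hΦ : ∀ x' (a : X1), Φ x' (a, x'.2) = ψ x' a)
    (hw : ∀ a' a, ∑ y : X2 × X3, ψ (a', y) a = w a') :
    ∑ x' : X1 × X2 × X3, ∑ x : X1 × X2 × X3,
      (if x'.2 = x.2 then K1 x'.1 x.1 else 0) * Φ x' x = 0 := by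
  have e1 : ∀ x' : X1 × X2 × X3,
      ∑ x : X1 × X2 × X3, (if x'.2 = x.2 then K1 x'.1 x.1 else 0) * Φ x' x
        = ∑ a, K1 x'.1 a * ψ x' a := by
    intro x'
    rw [SL1 K1 x' (Φ x')]
    exact Finset.sum_congr rfl fun a _ => by rw [hΦ]
  rw [Finset.sum_congr rfl fun x' _ => e1 x']
  rw [Fintype.sum_prod_type]
  have e2 : ∀ a', ∑ y : X2 × X3, ∑ a, K1 a' a * ψ (a', y) a
      = ∑ a, K1 a' a * w a' := by
    intro a'
    rw [Finset.sum_comm]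
    refine Finset.sum_congr rfl fun a _ => ?_
    rw [← Finset.mul_sum, hw]
  rw [Finset.sum_congr rfl fun a' _ => e2 a']
  have e3 : ∀ a', ∑ a, K1 a' a * w a' = 0 := by
    intro a'
    rw [← Finset.sum_mul, h1row, zero_mul]
  rw [Finset.sum_congr rfl fun a' _ => e3 a', Finset.sum_const, smul_zero]

lemma ZL2 (K2 : X1 × X2 → X1 × X2 → ℝ) (h2row : ∀ y', ∑ y, K2 y' y = 0)
    (Φ : X1 × X2 × X3 → X1 × X2 × X3 → ℝ) (ψ : X1 × X2 × X3 → X1 × X2 → ℝ) (w : X1 × X2 → ℝ)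
    (hΦ : ∀ x' (y : X1 × X2), Φ x' (y.1, y.2, x'.2.2) = ψ x' y)
    (hw : ∀ (y' : X1 × X2) (y : X1 × X2), ∑ c : X3, ψ (y'.1, y'.2, c) y = w y') :
    ∑ x' : X1 × X2 × X3, ∑ x : X1 × X2 × X3,
      (if x'.2.2 = x.2.2 then K2 (x'.1, x'.2.1) (x.1, x.2.1) else 0) * Φ x' x = 0 := by
  have e1 : ∀ x' : X1 × X2 × X3,
      ∑ x : X1 × X2 × X3,
        (if x'.2.2 = x.2.2 then K2 (x'.1, x'.2.1) (x.1, x.2.1) else 0) * Φ x' x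
        = ∑ y : X1 × X2, K2 (x'.1, x'.2.1) y * ψ x' y := by
    intro x'
    rw [SL2 K2 x' (Φ x')]
    exact Finset.sum_congr rfl fun y _ => by rw [hΦ]
  rw [Finset.sum_congr rfl fun x' _ => e1 x']
  rw [Fintype.sum_prod_type]
  refine Finset.sum_eq_zero fun a' _ => ?_
  rw [Fintype.sum_prod_type]
  refine Finset.sum_eq_zero fun b' _ => ?_
  rw [Finset.sum_comm]
  have e2 : ∀ y : X1 × X2, ∀ c : X3,
      K2 ((a', b', c).1, (a', b', c).2.1) y * ψ (a', b', c) y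
        = K2 (a', b') y * ψ (a', b', c) y := fun y c => rfl
  have e3 : ∀ y : X1 × X2, ∑ c : X3, K2 ((a', b', c).1, (a', b', c).2.1) y * ψ (a', b', c) y
      = K2 (a', b') y * w (a', b') := by
    intro y
    rw [Finset.sum_congr rfl fun c _ => e2 y c, ← Finset.mul_sum]
    exact congrArg _ (hw (a', b') y)
  rw [Finset.sum_congr rfl fun y _ => e3 y, ← Finset.sum_mul, h2row, zero_mul]

lemma Rrew {ι : Type*} [Fintype ι] (M : ι → ι → ℝ) (q h : ι → ℝ)
    (hM : ∀ x', ∑ x, M x' x = 0) :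
    (-∑ x' : ι, ∑ x : ι, M x' x * q x' * h x)
      = ∑ x' : ι, ∑ x : ι, M x' x * q x' * (h x' - h x) := by
  rw [← Finset.sum_neg_distrib]
  refine Finset.sum_congr rfl fun x' _ => ?_
  have h1 : ∑ x : ι, M x' x * q x' * h x' = 0 := by
    have : ∀ x : ι, M x' x * q x' * h x' = M x' x * (q x' * h x') := fun x => by ring
    rw [Finset.sum_congr rfl fun x _ => this x, ← Finset.sum_mul, hM, zero_mul]
  have : ∀ x : ι, M x' x * q x' * (h x' - h x)
      = M x' x * q x' * h x' - M x' x * q x' * h x := fun x => by ring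
  rw [Finset.sum_congr rfl fun x _ => this x, Finset.sum_sub_distrib, h1]
  ring

end Helpers


/-- For nested communities `ω' ⊂ ω ⊂ N`, the global EP rate satisfies
`⟨σ̇⟩ ≥ d^ω S^{X|X_ω}/dt + d^{ω'} S^{X_ω|X_{ω'}}/dt`, and both windowed
conditional-entropy derivatives are non-negative.  The joint space is modeled
as `X1 × X2 × X3` with `X1` the states of `ω'`, `X2` those of `ω∖ω'`, `X3`
those of `N∖ω`.  `K1` is the community rate matrix of `ω'`; `K2 = K(ω∖ω')`
acts on `X1 × X2` leaving the `X1` coordinate fixed; `K3 = K(N∖ω)` leaves the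
`X1` and `X2` coordinates fixed; the full rate matrix `K` is the sum of their
lifts.  `p` is the strictly positive joint distribution, `pω` its marginal on
`X1 × X2` and `p1` its marginal on `X1`.  All component rate matrices have
non-negative off-diagonal entries, zero row sums, and mutually positive
forward/backward entries. -/
theorem global_EP_bounded_by_two_windowed_derivatives
    {X1 X2 X3 : Type} [Fintype X1] [Fintype X2] [Fintype X3]
    [DecidableEq X1] [DecidableEq X2] [DecidableEq X3]
    (K1 : X1 → X1 → ℝ) (K2 : X1 × X2 → X1 × X2 → ℝ)
    (K3 : X1 × X2 × X3 → X1 × X2 × X3 → ℝ)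
    (h1off : ∀ a' a, a' ≠ a → 0 ≤ K1 a' a)
    (h1row : ∀ a', ∑ a, K1 a' a = 0)
    (h1iff : ∀ a' a, a' ≠ a → (0 < K1 a' a ↔ 0 < K1 a a'))
    (h2off : ∀ y' y, y' ≠ y → 0 ≤ K2 y' y)
    (h2row : ∀ y', ∑ y, K2 y' y = 0)
    (h2iff : ∀ y' y, y' ≠ y → (0 < K2 y' y ↔ 0 < K2 y y'))
    (h2fix : ∀ y' y, K2 y' y ≠ 0 → y'.1 = y.1)
    (h3off : ∀ x' x, x' ≠ x → 0 ≤ K3 x' x)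
    (h3row : ∀ x', ∑ x, K3 x' x = 0)
    (h3iff : ∀ x' x, x' ≠ x → (0 < K3 x' x ↔ 0 < K3 x x'))
    (h3fix : ∀ x' x, K3 x' x ≠ 0 → x'.1 = x.1 ∧ x'.2.1 = x.2.1)
    (p : X1 × X2 × X3 → ℝ) (hp : ∀ x, 0 < p x) (hp1 : ∑ x, p x = 1)
    (K : X1 × X2 × X3 → X1 × X2 × X3 → ℝ)
    (hK : ∀ x' x, K x' x = (if x'.2 = x.2 then K1 x'.1 x.1 else 0)
        + (if x'.2.2 = x.2.2 then K2 (x'.1, x'.2.1) (x.1, x.2.1) else 0)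
        + K3 x' x)
    (pω : X1 × X2 → ℝ) (hpω : ∀ y, pω y = ∑ c, p (y.1, y.2, c))
    (p1 : X1 → ℝ) (hp1m : ∀ a, p1 a = ∑ b, ∑ c, p (a, b, c)) :
    ((-∑ x' : X1 × X2 × X3, ∑ x : X1 × X2 × X3,
        ((if x'.2 = x.2 then K1 x'.1 x.1 else 0)
          + (if x'.2.2 = x.2.2 then K2 (x'.1, x'.2.1) (x.1, x.2.1) else 0)) *
          p x' * Real.log (p x / pω (x.1, x.2.1)))
      + (-∑ x' : X1 × X2 × X3, ∑ x : X1 × X2 × X3,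
          (if x'.2 = x.2 then K1 x'.1 x.1 else 0) * p x' *
            Real.log (pω (x.1, x.2.1) / p1 x.1)))
      ≤ (∑ x' : X1 × X2 × X3, ∑ x : X1 × X2 × X3, if x' = x then 0 else
          K x' x * p x' * Real.log (K x' x * p x' / (K x x' * p x)))
    ∧ 0 ≤ -∑ x' : X1 × X2 × X3, ∑ x : X1 × X2 × X3,
        ((if x'.2 = x.2 then K1 x'.1 x.1 else 0)
          + (if x'.2.2 = x.2.2 then K2 (x'.1, x'.2.1) (x.1, x.2.1) else 0)) *
          p x' * Real.log (p x / pω (x.1, x.2.1))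
    ∧ 0 ≤ -∑ x' : X1 × X2 × X3, ∑ x : X1 × X2 × X3,
        (if x'.2 = x.2 then K1 x'.1 x.1 else 0) * p x' *
          Real.log (pω (x.1, x.2.1) / p1 x.1) := by
  -- nonemptiness
  have hne : Nonempty (X1 × X2 × X3) := by
    by_contra h
    rw [not_nonempty_iff] at h
    rw [Finset.univ_eq_empty, Finset.sum_empty] at hp1
    norm_num at hp1
  obtain ⟨⟨a0, b0, c0⟩⟩ := hne
  -- positivity of marginals
  have hpωpos : ∀ y : X1 × X2, 0 < pω y := by
    intro y; rw [hpω y]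
    exact Finset.sum_pos (fun c _ => hp _) ⟨c0, Finset.mem_univ c0⟩
  have hp1pos : ∀ a, 0 < p1 a := by
    intro a; rw [hp1m a]
    exact Finset.sum_pos
      (fun b _ => Finset.sum_pos (fun c _ => hp _) ⟨c0, Finset.mem_univ c0⟩)
      ⟨b0, Finset.mem_univ b0⟩
  -- marginal identities
  have hmargc : ∀ (a : X1) (b : X2), ∑ c, p (a, b, c) = pω (a, b) :=
    fun a b => (hpω (a, b)).symm
  have hmargb : ∀ a, ∑ b, pω (a, b) = p1 a := by
    intro a; rw [hp1m a]
    exact Finset.sum_congr rfl fun b _ => hpω (a, b)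
  have hmargy : ∀ a, ∑ y : X2 × X3, p (a, y) = p1 a := by
    intro a; rw [hp1m a, Fintype.sum_prod_type]
  -- row sums of lifted matrices
  have row1 : ∀ x' : X1 × X2 × X3,
      ∑ x : X1 × X2 × X3, (if x'.2 = x.2 then K1 x'.1 x.1 else 0) = 0 := by
    intro x'
    have h := SL1 K1 x' (fun _ => (1:ℝ))
    simp only [mul_one] at h
    rw [h, h1row]
  have row2 : ∀ x' : X1 × X2 × X3,
      ∑ x : X1 × X2 × X3, (if x'.2.2 = x.2.2 then K2 (x'.1, x'.2.1) (x.1, x.2.1) else 0) = 0 := by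
    intro x'
    have h := SL2 K2 x' (fun _ => (1:ℝ))
    simp only [mul_one] at h
    rw [h, h2row]
  -- vanishing entries
  have hK2z : ∀ y' y : X1 × X2, y'.1 ≠ y.1 → K2 y' y = 0 := by
    intro y' y h; by_contra hc; exact h (h2fix y' y hc)
  have hK3z : ∀ x' x : X1 × X2 × X3, ¬(x'.1 = x.1 ∧ x'.2.1 = x.2.1) → K3 x' x = 0 := by
    intro x' x h; by_contra hc; exact h (h3fix x' x hc)
  -- ratio marginal identities
  have MA : ∀ (a' a : X1), ∑ y : X2 × X3,
      p (a', y) * ((p (a, y) / pω (a, y.1)) / (p (a', y) / pω (a', y.1))) = p1 a' := by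
    intro a' a
    rw [Fintype.sum_prod_type]
    have step : ∀ b : X2, ∑ c : X3,
        p (a', b, c) * ((p (a, b, c) / pω (a, b)) / (p (a', b, c) / pω (a', b)))
          = pω (a', b) := by
      intro b
      have e : ∀ c : X3,
          p (a', b, c) * ((p (a, b, c) / pω (a, b)) / (p (a', b, c) / pω (a', b)))
            = p (a, b, c) * (pω (a', b) / pω (a, b)) := by
        intro c
        have h1 := (hp (a', b, c)).ne'
        have h2 := (hpωpos (a, b)).ne'
        have h3 := (hpωpos (a', b)).ne'
        field_simp
      rw [Finset.sum_congr rfl fun c _ => e c, ← Finset.sum_mul, hmargc a b]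
      rw [mul_div_assoc']
      rw [mul_comm]
      rw [mul_div_assoc]
      rw [div_self (hpωpos (a, b)).ne', mul_one]
    exact (Finset.sum_congr rfl fun b _ => step b).trans (hmargb a')
  have MB : ∀ (a' a : X1), ∑ y : X2 × X3,
      p (a', y) * ((pω (a, y.1) / p1 a) / (pω (a', y.1) / p1 a')) = p1 a' := by
    intro a' a
    rw [Fintype.sum_prod_type]
    have step : ∀ b : X2, ∑ c : X3,
        p (a', b, c) * ((pω (a, b) / p1 a) / (pω (a', b) / p1 a'))
          = pω (a, b) * (p1 a' / p1 a) := by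
      intro b
      rw [← Finset.sum_mul, hmargc a' b]
      have h1 := (hp1pos a).ne'
      have h2 := (hp1pos a').ne'
      have h3 := (hpωpos (a', b)).ne'
      field_simp
    rw [Finset.sum_congr rfl fun b _ => step b, ← Finset.sum_mul, hmargb a]
    rw [mul_div_assoc']
    rw [mul_comm]
    rw [mul_div_assoc]
    rw [div_self (hp1pos a).ne', mul_one]
  have MC : ∀ (a' a : X1), ∑ y : X2 × X3,
      p (a', y) * ((p (a, y) / p1 a) / (p (a', y) / p1 a')) = p1 a' := by
    intro a' a
    have e : ∀ y : X2 × X3,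
        p (a', y) * ((p (a, y) / p1 a) / (p (a', y) / p1 a'))
          = p (a, y) * (p1 a' / p1 a) := by
      intro y
      have h1 := (hp (a', y)).ne'
      have h2 := (hp1pos a).ne'
      have h3 := (hp1pos a').ne'
      field_simp
    rw [Finset.sum_congr rfl fun y _ => e y, ← Finset.sum_mul, hmargy a]
    rw [mul_div_assoc']
    rw [mul_comm]
    rw [mul_div_assoc]
    rw [div_self (hp1pos a).ne', mul_one]
  have M2A : ∀ (y' y : X1 × X2), ∑ c : X3,
      p (y'.1, y'.2, c) * ((p (y.1, y.2, c) / pω y) / (p (y'.1, y'.2, c) / pω y')) = pω y' := by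
    intro y' y
    have e : ∀ c : X3,
        p (y'.1, y'.2, c) * ((p (y.1, y.2, c) / pω y) / (p (y'.1, y'.2, c) / pω y'))
          = p (y.1, y.2, c) * (pω y' / pω y) := by
      intro c
      have h1 := (hp (y'.1, y'.2, c)).ne'
      have h2 := (hpωpos y).ne'
      have h3 := (hpωpos y').ne'
      field_simp
    rw [Finset.sum_congr rfl fun c _ => e c, ← Finset.sum_mul, hmargc y.1 y.2]
    rw [mul_div_assoc']
    rw [mul_comm]
    rw [mul_div_assoc]
    have : pω (y.1, y.2) = pω y := rfl
    rw [this, div_self (hpωpos y).ne', mul_one]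
  refine ⟨?_, ?_, ?_⟩
  · -- first conjunct : A + B ≤ EP
    have rowA : ∀ x' : X1 × X2 × X3, ∑ x : X1 × X2 × X3, ((if x'.2 = x.2 then K1 x'.1 x.1 else 0) + (if x'.2.2 = x.2.2 then K2 (x'.1, x'.2.1) (x.1, x.2.1) else 0)) = 0 := by
      intro x'
      rw [Finset.sum_add_distrib, row1, row2, add_zero]
    have eA : (-∑ x' : X1 × X2 × X3, ∑ x : X1 × X2 × X3,
        ((if x'.2 = x.2 then K1 x'.1 x.1 else 0)
          + (if x'.2.2 = x.2.2 then K2 (x'.1, x'.2.1) (x.1, x.2.1) else 0)) *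
          p x' * Real.log (p x / pω (x.1, x.2.1)))
        = ∑ x' : X1 × X2 × X3, ∑ x : X1 × X2 × X3, ((if x'.2 = x.2 then K1 x'.1 x.1 else 0) + (if x'.2.2 = x.2.2 then K2 (x'.1, x'.2.1) (x.1, x.2.1) else 0)) * p x' * (Real.log (p x' / pω (x'.1, x'.2.1)) - Real.log (p x / pω (x.1, x.2.1))) :=
      Rrew _ p _ rowA
    have eB : (-∑ x' : X1 × X2 × X3, ∑ x : X1 × X2 × X3,
          (if x'.2 = x.2 then K1 x'.1 x.1 else 0) * p x' *
            Real.log (pω (x.1, x.2.1) / p1 x.1))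
        = ∑ x' : X1 × X2 × X3, ∑ x : X1 × X2 × X3, (if x'.2 = x.2 then K1 x'.1 x.1 else 0) * p x' * (Real.log (pω (x'.1, x'.2.1) / p1 x'.1) - Real.log (pω (x.1, x.2.1) / p1 x.1)) :=
      Rrew _ p _ row1
    rw [eA, eB]
    have hlog : ∀ x : X1 × X2 × X3, Real.log (p x / pω (x.1, x.2.1)) + Real.log (pω (x.1, x.2.1) / p1 x.1)
        = Real.log (p x / p1 x.1) := by
      intro x
      rw [Real.log_div (hp x).ne' (hpωpos _).ne', Real.log_div (hpωpos _).ne' (hp1pos _).ne',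
        Real.log_div (hp x).ne' (hp1pos _).ne']
      ring
    have comb : (∑ x' : X1 × X2 × X3, ∑ x : X1 × X2 × X3, ((if x'.2 = x.2 then K1 x'.1 x.1 else 0) + (if x'.2.2 = x.2.2 then K2 (x'.1, x'.2.1) (x.1, x.2.1) else 0)) * p x' * (Real.log (p x' / pω (x'.1, x'.2.1)) - Real.log (p x / pω (x.1, x.2.1)))) + (∑ x' : X1 × X2 × X3, ∑ x : X1 × X2 × X3, (if x'.2 = x.2 then K1 x'.1 x.1 else 0) * p x' * (Real.log (pω (x'.1, x'.2.1) / p1 x'.1) - Real.log (pω (x.1, x.2.1) / p1 x.1))) = ∑ x' : X1 × X2 × X3, ∑ x : X1 × X2 × X3, ((if x'.2 = x.2 then K1 x'.1 x.1 else 0) * p x' * (Real.log (p x' / p1 x'.1) - Real.log (p x / p1 x.1)) + (if x'.2.2 = x.2.2 then K2 (x'.1, x'.2.1) (x.1, x.2.1) else 0) * p x' * (Real.log (p x' / pω (x'.1, x'.2.1)) - Real.log (p x / pω (x.1, x.2.1)))) := by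
      rw [← Finset.sum_add_distrib]
      refine Finset.sum_congr rfl fun x' _ => ?_
      rw [← Finset.sum_add_distrib]
      refine Finset.sum_congr rfl fun x _ => ?_
      linear_combination ((if x'.2 = x.2 then K1 x'.1 x.1 else 0) * p x') * hlog x' - ((if x'.2 = x.2 then K1 x'.1 x.1 else 0) * p x') * hlog x
    rw [comb]
    -- flux balances
    have z1 : (∑ x' : X1 × X2 × X3, ∑ x : X1 × X2 × X3, (if x'.2 = x.2 then K1 x'.1 x.1 else 0) * p x') = 0 :=
      ZL1 K1 h1row _ (fun x' _ => p x') p1 (fun _ _ => rfl) (fun a' _ => hmargy a')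
    have z2 : (∑ x' : X1 × X2 × X3, ∑ x : X1 × X2 × X3, (if x'.2.2 = x.2.2 then K2 (x'.1, x'.2.1) (x.1, x.2.1) else 0) * p x') = 0 :=
      ZL2 K2 h2row _ (fun x' _ => p x') pω (fun _ _ => rfl) (fun y' _ => hmargc y'.1 y'.2)
    have zU : (∑ x' : X1 × X2 × X3, ∑ x : X1 × X2 × X3, K x' x * p x') = 0 := by
      have e : ∀ x' x : X1 × X2 × X3, K x' x * p x'
          = (if x'.2 = x.2 then K1 x'.1 x.1 else 0) * p x' + (if x'.2.2 = x.2.2 then K2 (x'.1, x'.2.1) (x.1, x.2.1) else 0) * p x' + K3 x' x * p x' := by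
        intro x' x; rw [hK x' x]; ring
      rw [Finset.sum_congr rfl fun x' _ => Finset.sum_congr rfl fun x _ => e x' x]
      simp only [Finset.sum_add_distrib]
      rw [z1, z2]
      have z3 : (∑ x' : X1 × X2 × X3, ∑ x : X1 × X2 × X3, K3 x' x * p x') = 0 := by
        refine Finset.sum_eq_zero fun x' _ => ?_
        rw [← Finset.sum_mul, h3row, zero_mul]
      rw [z3]
      norm_num
    have zV : (∑ x' : X1 × X2 × X3, ∑ x : X1 × X2 × X3, ((if x'.2 = x.2 then K1 x.1 x'.1 else 0) * p x * ((p x' / p1 x'.1) / (p x / p1 x.1)) + (if x'.2.2 = x.2.2 then K2 (x.1, x.2.1) (x'.1, x'.2.1) else 0) * p x * ((p x' / pω (x'.1, x'.2.1)) / (p x / pω (x.1, x.2.1))) + K3 x x' * p x)) = 0 := by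
      simp only [Finset.sum_add_distrib]
      have s1 : (∑ x' : X1 × X2 × X3, ∑ x : X1 × X2 × X3, (if x'.2 = x.2 then K1 x.1 x'.1 else 0) * p x * ((p x' / p1 x'.1) / (p x / p1 x.1))) = 0 := by
        rw [Finset.sum_comm]
        have ef : ∀ x x' : X1 × X2 × X3, (if x'.2 = x.2 then K1 x.1 x'.1 else 0) * p x * ((p x' / p1 x'.1) / (p x / p1 x.1))
            = (if x.2 = x'.2 then K1 x.1 x'.1 else 0) * (p x * ((p x' / p1 x'.1) / (p x / p1 x.1))) := by
          intro x x'
          by_cases hb : x'.2 = x.2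
          · rw [if_pos hb, if_pos hb.symm, mul_assoc]
          · rw [if_neg hb, if_neg (fun h => hb h.symm)]; ring
        rw [Finset.sum_congr rfl fun x _ => Finset.sum_congr rfl fun x' _ => ef x x']
        exact ZL1 K1 h1row _
          (fun X a => p X * ((p (a, X.2) / p1 a) / (p X / p1 X.1)))
          p1 (fun _ _ => rfl) (fun a' a => MC a' a)
      have s2 : (∑ x' : X1 × X2 × X3, ∑ x : X1 × X2 × X3, (if x'.2.2 = x.2.2 then K2 (x.1, x.2.1) (x'.1, x'.2.1) else 0) * p x * ((p x' / pω (x'.1, x'.2.1)) / (p x / pω (x.1, x.2.1)))) = 0 := by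
        rw [Finset.sum_comm]
        have ef : ∀ x x' : X1 × X2 × X3, (if x'.2.2 = x.2.2 then K2 (x.1, x.2.1) (x'.1, x'.2.1) else 0) * p x * ((p x' / pω (x'.1, x'.2.1)) / (p x / pω (x.1, x.2.1)))
            = (if x.2.2 = x'.2.2 then K2 (x.1, x.2.1) (x'.1, x'.2.1) else 0)
                * (p x * ((p x' / pω (x'.1, x'.2.1)) / (p x / pω (x.1, x.2.1)))) := by
          intro x x'
          by_cases hc : x'.2.2 = x.2.2
          · rw [if_pos hc, if_pos hc.symm, mul_assoc]
          · rw [if_neg hc, if_neg (fun h => hc h.symm)]; ring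
        rw [Finset.sum_congr rfl fun x _ => Finset.sum_congr rfl fun x' _ => ef x x']
        exact ZL2 K2 h2row _
          (fun X y => p X * ((p (y.1, y.2, X.2.2) / pω y) / (p X / pω (X.1, X.2.1))))
          pω (fun _ _ => rfl) (fun y' y => M2A y' y)
      have s3 : (∑ x' : X1 × X2 × X3, ∑ x : X1 × X2 × X3, K3 x x' * p x) = 0 := by
        rw [Finset.sum_comm]
        refine Finset.sum_eq_zero fun x _ => ?_
        rw [← Finset.sum_mul, h3row, zero_mul]
      rw [s1, s2, s3]
      norm_num
    have FBEP : (∑ x' : X1 × X2 × X3, ∑ x : X1 × X2 × X3, if x' = x then 0 else K x' x * p x')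
        = ∑ x' : X1 × X2 × X3, ∑ x : X1 × X2 × X3, if x' = x then 0 else ((if x'.2 = x.2 then K1 x.1 x'.1 else 0) * p x * ((p x' / p1 x'.1) / (p x / p1 x.1)) + (if x'.2.2 = x.2.2 then K2 (x.1, x.2.1) (x'.1, x'.2.1) else 0) * p x * ((p x' / pω (x'.1, x'.2.1)) / (p x / pω (x.1, x.2.1))) + K3 x x' * p x) := by
      rw [split_diag, split_diag, zU, zV]
      congr 1
      refine Finset.sum_congr rfl fun x _ => ?_
      rw [hK x x]
      have e1 : (if x.2 = x.2 then K1 x.1 x.1 else 0) = K1 x.1 x.1 := if_pos rfl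
      have e2 : (if x.2.2 = x.2.2 then K2 (x.1, x.2.1) (x.1, x.2.1) else 0)
          = K2 (x.1, x.2.1) (x.1, x.2.1) := if_pos rfl
      have e3 : (p x / p1 x.1) / (p x / p1 x.1) = 1 :=
        div_self (div_pos (hp x) (hp1pos _)).ne'
      have e4 : (p x / pω (x.1, x.2.1)) / (p x / pω (x.1, x.2.1)) = 1 :=
        div_self (div_pos (hp x) (hpωpos _)).ne'
      rw [e1, e2, e3, e4]
      ring
    have main : ∀ x' x : X1 × X2 × X3,
        (if x' = x then 0 else K x' x * p x') - (if x' = x then 0 else ((if x'.2 = x.2 then K1 x.1 x'.1 else 0) * p x * ((p x' / p1 x'.1) / (p x / p1 x.1)) + (if x'.2.2 = x.2.2 then K2 (x.1, x.2.1) (x'.1, x'.2.1) else 0) * p x * ((p x' / pω (x'.1, x'.2.1)) / (p x / pω (x.1, x.2.1))) + K3 x x' * p x))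
          ≤ (if x' = x then 0 else K x' x * p x' * Real.log (K x' x * p x' / (K x x' * p x))) - ((if x'.2 = x.2 then K1 x'.1 x.1 else 0) * p x' * (Real.log (p x' / p1 x'.1) - Real.log (p x / p1 x.1)) + (if x'.2.2 = x.2.2 then K2 (x'.1, x'.2.1) (x.1, x.2.1) else 0) * p x' * (Real.log (p x' / pω (x'.1, x'.2.1)) - Real.log (p x / pω (x.1, x.2.1)))) := by
      intro x' x
      by_cases hd : x' = x
      · subst hd
        rw [if_pos rfl, if_pos rfl, if_pos rfl]
        simp
      · rw [if_neg hd, if_neg hd, if_neg hd]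
        by_cases hb : x'.2 = x.2
        · -- K1 sector
          have ha : x'.1 ≠ x.1 := fun h => hd (Prod.ext h hb)
          have hbc : x'.2.2 = x.2.2 := by rw [hb]
          have k2z : K2 (x'.1, x'.2.1) (x.1, x.2.1) = 0 := hK2z _ _ ha
          have k2z' : K2 (x.1, x.2.1) (x'.1, x'.2.1) = 0 := hK2z _ _ (Ne.symm ha)
          have k3z : K3 x' x = 0 := hK3z _ _ (fun h => ha h.1)
          have k3z' : K3 x x' = 0 := hK3z _ _ (fun h => ha (Eq.symm h.1))
          have i1 : (if x'.2 = x.2 then K1 x'.1 x.1 else 0) = K1 x'.1 x.1 := if_pos hb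
          have i1r : (if x.2 = x'.2 then K1 x.1 x'.1 else 0) = K1 x.1 x'.1 := if_pos hb.symm
          have i1v : (if x'.2 = x.2 then K1 x.1 x'.1 else 0) = K1 x.1 x'.1 := if_pos hb
          have j1 : (if x'.2.2 = x.2.2 then K2 (x'.1, x'.2.1) (x.1, x.2.1) else 0) = 0 := by
            rw [if_pos hbc, k2z]
          have j1r : (if x.2.2 = x'.2.2 then K2 (x.1, x.2.1) (x'.1, x'.2.1) else 0) = 0 := by
            rw [if_pos hbc.symm, k2z']
          have j1v : (if x'.2.2 = x.2.2 then K2 (x.1, x.2.1) (x'.1, x'.2.1) else 0) = 0 := by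
            rw [if_pos hbc, k2z']
          rw [hK x' x, hK x x', i1, i1r, i1v, j1, j1r, j1v, k3z, k3z']
          simp only [add_zero, zero_add, zero_mul, mul_zero, sub_zero]
          exact core1 (K1 x'.1 x.1) (K1 x.1 x'.1) (p x) (p x')
            (p x / p1 x.1) (p x' / p1 x'.1)
            (h1off _ _ ha) (h1off _ _ (Ne.symm ha)) (fun hpos => (h1iff _ _ ha).mp hpos)
            (hp x) (hp x') (div_pos (hp x) (hp1pos _)) (div_pos (hp x') (hp1pos _))
        · have i1 : (if x'.2 = x.2 then K1 x'.1 x.1 else 0) = 0 := if_neg hb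
          have i1r : (if x.2 = x'.2 then K1 x.1 x'.1 else 0) = 0 :=
            if_neg (fun h => hb h.symm)
          have i1v : (if x'.2 = x.2 then K1 x.1 x'.1 else 0) = 0 := if_neg hb
          by_cases hc : x'.2.2 = x.2.2
          · by_cases ha : x'.1 = x.1
            · -- K2 sector
              have hb1 : x'.2.1 ≠ x.2.1 := fun h => hb (Prod.ext h hc)
              have hy : (x'.1, x'.2.1) ≠ (x.1, x.2.1) := by
                intro h
                exact hb1 (by rw [show x'.2.1 = (x'.1, x'.2.1).2 from rfl, h])
              have k3z : K3 x' x = 0 := hK3z _ _ (fun h => hb1 h.2)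
              have k3z' : K3 x x' = 0 := hK3z _ _ (fun h => hb1 (Eq.symm h.2))
              have j1 : (if x'.2.2 = x.2.2 then K2 (x'.1, x'.2.1) (x.1, x.2.1) else 0)
                  = K2 (x'.1, x'.2.1) (x.1, x.2.1) := if_pos hc
              have j1r : (if x.2.2 = x'.2.2 then K2 (x.1, x.2.1) (x'.1, x'.2.1) else 0)
                  = K2 (x.1, x.2.1) (x'.1, x'.2.1) := if_pos hc.symm
              have j1v : (if x'.2.2 = x.2.2 then K2 (x.1, x.2.1) (x'.1, x'.2.1) else 0)
                  = K2 (x.1, x.2.1) (x'.1, x'.2.1) := if_pos hc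
              rw [hK x' x, hK x x', i1, i1r, i1v, j1, j1r, j1v, k3z, k3z']
              simp only [add_zero, zero_add, zero_mul, mul_zero, sub_zero]
              exact core1 (K2 (x'.1, x'.2.1) (x.1, x.2.1)) (K2 (x.1, x.2.1) (x'.1, x'.2.1))
                (p x) (p x') (p x / pω (x.1, x.2.1)) (p x' / pω (x'.1, x'.2.1))
                (h2off _ _ hy) (h2off _ _ (Ne.symm hy)) (fun hpos => (h2iff _ _ hy).mp hpos)
                (hp x) (hp x') (div_pos (hp x) (hpωpos _)) (div_pos (hp x') (hpωpos _))
            · -- null : a and (b or c) differ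
              have k2z : K2 (x'.1, x'.2.1) (x.1, x.2.1) = 0 := hK2z _ _ ha
              have k2z' : K2 (x.1, x.2.1) (x'.1, x'.2.1) = 0 := hK2z _ _ (Ne.symm ha)
              have k3z : K3 x' x = 0 := hK3z _ _ (fun h => ha h.1)
              have k3z' : K3 x x' = 0 := hK3z _ _ (fun h => ha (Eq.symm h.1))
              have j1 : (if x'.2.2 = x.2.2 then K2 (x'.1, x'.2.1) (x.1, x.2.1) else 0) = 0 := by
                rw [if_pos hc, k2z]
              have j1r : (if x.2.2 = x'.2.2 then K2 (x.1, x.2.1) (x'.1, x'.2.1) else 0) = 0 := by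
                rw [if_pos hc.symm, k2z']
              have j1v : (if x'.2.2 = x.2.2 then K2 (x.1, x.2.1) (x'.1, x'.2.1) else 0) = 0 := by
                rw [if_pos hc, k2z']
              rw [hK x' x, hK x x', i1, i1r, i1v, j1, j1r, j1v, k3z, k3z']
              simp
          · -- K3 sector or null
            have j1 : (if x'.2.2 = x.2.2 then K2 (x'.1, x'.2.1) (x.1, x.2.1) else 0) = 0 :=
              if_neg hc
            have j1r : (if x.2.2 = x'.2.2 then K2 (x.1, x.2.1) (x'.1, x'.2.1) else 0) = 0 :=
              if_neg (fun h => hc h.symm)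
            have j1v : (if x'.2.2 = x.2.2 then K2 (x.1, x.2.1) (x'.1, x'.2.1) else 0) = 0 :=
              if_neg hc
            by_cases hfix : x'.1 = x.1 ∧ x'.2.1 = x.2.1
            · rw [hK x' x, hK x x', i1, i1r, i1v, j1, j1r, j1v]
              simp only [add_zero, zero_add, zero_mul, mul_zero, sub_zero]
              exact core3 (K3 x' x) (K3 x x') (p x) (p x')
                (h3off _ _ hd) (h3off _ _ (Ne.symm hd)) (fun hpos => (h3iff _ _ hd).mp hpos)
                (hp x) (hp x')
            · have k3z : K3 x' x = 0 := hK3z _ _ hfix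
              have k3z' : K3 x x' = 0 :=
                hK3z _ _ (fun h => hfix ⟨Eq.symm h.1, Eq.symm h.2⟩)
              rw [hK x' x, hK x x', i1, i1r, i1v, j1, j1r, j1v, k3z, k3z']
              simp
    have sle : (∑ x' : X1 × X2 × X3, ∑ x : X1 × X2 × X3,
          ((if x' = x then 0 else K x' x * p x') - (if x' = x then 0 else ((if x'.2 = x.2 then K1 x.1 x'.1 else 0) * p x * ((p x' / p1 x'.1) / (p x / p1 x.1)) + (if x'.2.2 = x.2.2 then K2 (x.1, x.2.1) (x'.1, x'.2.1) else 0) * p x * ((p x' / pω (x'.1, x'.2.1)) / (p x / pω (x.1, x.2.1))) + K3 x x' * p x))))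
        ≤ ∑ x' : X1 × X2 × X3, ∑ x : X1 × X2 × X3, ((if x' = x then 0 else K x' x * p x' * Real.log (K x' x * p x' / (K x x' * p x))) - ((if x'.2 = x.2 then K1 x'.1 x.1 else 0) * p x' * (Real.log (p x' / p1 x'.1) - Real.log (p x / p1 x.1)) + (if x'.2.2 = x.2.2 then K2 (x'.1, x'.2.1) (x.1, x.2.1) else 0) * p x' * (Real.log (p x' / pω (x'.1, x'.2.1)) - Real.log (p x / pω (x.1, x.2.1))))) :=
      Finset.sum_le_sum fun x' _ => Finset.sum_le_sum fun x _ => main x' x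
    rw [show (∑ x' : X1 × X2 × X3, ∑ x : X1 × X2 × X3,
          ((if x' = x then 0 else K x' x * p x') - (if x' = x then 0 else ((if x'.2 = x.2 then K1 x.1 x'.1 else 0) * p x * ((p x' / p1 x'.1) / (p x / p1 x.1)) + (if x'.2.2 = x.2.2 then K2 (x.1, x.2.1) (x'.1, x'.2.1) else 0) * p x * ((p x' / pω (x'.1, x'.2.1)) / (p x / pω (x.1, x.2.1))) + K3 x x' * p x)))) = 0 by
        simp only [Finset.sum_sub_distrib]
        rw [FBEP, sub_self]] at sle
    rw [show (∑ x' : X1 × X2 × X3, ∑ x : X1 × X2 × X3, ((if x' = x then 0 else K x' x * p x' * Real.log (K x' x * p x' / (K x x' * p x))) - ((if x'.2 = x.2 then K1 x'.1 x.1 else 0) * p x' * (Real.log (p x' / p1 x'.1) - Real.log (p x / p1 x.1)) + (if x'.2.2 = x.2.2 then K2 (x'.1, x'.2.1) (x.1, x.2.1) else 0) * p x' * (Real.log (p x' / pω (x'.1, x'.2.1)) - Real.log (p x / pω (x.1, x.2.1))))))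
        = (∑ x' : X1 × X2 × X3, ∑ x : X1 × X2 × X3, if x' = x then 0 else K x' x * p x' * Real.log (K x' x * p x' / (K x x' * p x)))
          - ∑ x' : X1 × X2 × X3, ∑ x : X1 × X2 × X3, ((if x'.2 = x.2 then K1 x'.1 x.1 else 0) * p x' * (Real.log (p x' / p1 x'.1) - Real.log (p x / p1 x.1)) + (if x'.2.2 = x.2.2 then K2 (x'.1, x'.2.1) (x.1, x.2.1) else 0) * p x' * (Real.log (p x' / pω (x'.1, x'.2.1)) - Real.log (p x / pω (x.1, x.2.1)))) by
        simp only [Finset.sum_sub_distrib]] at sle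
    linarith
  · -- second conjunct : A ≥ 0
    have rowA : ∀ x' : X1 × X2 × X3, ∑ x : X1 × X2 × X3, ((if x'.2 = x.2 then K1 x'.1 x.1 else 0) + (if x'.2.2 = x.2.2 then K2 (x'.1, x'.2.1) (x.1, x.2.1) else 0)) = 0 := by
      intro x'
      rw [Finset.sum_add_distrib, row1, row2, add_zero]
    rw [Rrew _ p (fun x => Real.log (p x / pω (x.1, x.2.1))) rowA]
    have z1 : (∑ x' : X1 × X2 × X3, ∑ x : X1 × X2 × X3, (if x'.2 = x.2 then K1 x'.1 x.1 else 0) * p x') = 0 :=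
      ZL1 K1 h1row _ (fun x' _ => p x') p1 (fun _ _ => rfl) (fun a' _ => hmargy a')
    have z2 : (∑ x' : X1 × X2 × X3, ∑ x : X1 × X2 × X3, (if x'.2.2 = x.2.2 then K2 (x'.1, x'.2.1) (x.1, x.2.1) else 0) * p x') = 0 :=
      ZL2 K2 h2row _ (fun x' _ => p x') pω (fun _ _ => rfl) (fun y' _ => hmargc y'.1 y'.2)
    have z3 : (∑ x' : X1 × X2 × X3, ∑ x : X1 × X2 × X3, (if x'.2 = x.2 then K1 x'.1 x.1 else 0) * (p x' * ((p x / pω (x.1, x.2.1)) / (p x' / pω (x'.1, x'.2.1))))) = 0 :=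
      ZL1 K1 h1row _
        (fun x' a => p x' * ((p (a, x'.2) / pω (a, x'.2.1)) / (p x' / pω (x'.1, x'.2.1))))
        p1 (fun _ _ => rfl) (fun a' a => MA a' a)
    have z4 : (∑ x' : X1 × X2 × X3, ∑ x : X1 × X2 × X3, (if x'.2.2 = x.2.2 then K2 (x'.1, x'.2.1) (x.1, x.2.1) else 0) * (p x' * ((p x / pω (x.1, x.2.1)) / (p x' / pω (x'.1, x'.2.1))))) = 0 :=
      ZL2 K2 h2row _
        (fun x' y => p x' * ((p (y.1, y.2, x'.2.2) / pω y) / (p x' / pω (x'.1, x'.2.1))))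
        pω (fun _ _ => rfl) (fun y' y => M2A y' y)
    have FB : (∑ x' : X1 × X2 × X3, ∑ x : X1 × X2 × X3, if x' = x then 0 else ((if x'.2 = x.2 then K1 x'.1 x.1 else 0) + (if x'.2.2 = x.2.2 then K2 (x'.1, x'.2.1) (x.1, x.2.1) else 0)) * p x')
        = ∑ x' : X1 × X2 × X3, ∑ x : X1 × X2 × X3, if x' = x then 0 else ((if x'.2 = x.2 then K1 x'.1 x.1 else 0) + (if x'.2.2 = x.2.2 then K2 (x'.1, x'.2.1) (x.1, x.2.1) else 0)) * p x' * ((p x / pω (x.1, x.2.1)) / (p x' / pω (x'.1, x'.2.1))) := by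
      rw [split_diag, split_diag]
      congr 1
      · have eU : ∀ x' x : X1 × X2 × X3, ((if x'.2 = x.2 then K1 x'.1 x.1 else 0) + (if x'.2.2 = x.2.2 then K2 (x'.1, x'.2.1) (x.1, x.2.1) else 0)) * p x' = (if x'.2 = x.2 then K1 x'.1 x.1 else 0) * p x' + (if x'.2.2 = x.2.2 then K2 (x'.1, x'.2.1) (x.1, x.2.1) else 0) * p x' := fun _ _ => add_mul _ _ _
        have eV : ∀ x' x : X1 × X2 × X3, ((if x'.2 = x.2 then K1 x'.1 x.1 else 0) + (if x'.2.2 = x.2.2 then K2 (x'.1, x'.2.1) (x.1, x.2.1) else 0)) * p x' * ((p x / pω (x.1, x.2.1)) / (p x' / pω (x'.1, x'.2.1))) = (if x'.2 = x.2 then K1 x'.1 x.1 else 0) * (p x' * ((p x / pω (x.1, x.2.1)) / (p x' / pω (x'.1, x'.2.1)))) + (if x'.2.2 = x.2.2 then K2 (x'.1, x'.2.1) (x.1, x.2.1) else 0) * (p x' * ((p x / pω (x.1, x.2.1)) / (p x' / pω (x'.1, x'.2.1)))) :=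
          fun _ _ => by ring
        rw [Finset.sum_congr rfl fun x' _ => Finset.sum_congr rfl fun x _ => eU x' x]
        rw [Finset.sum_congr rfl fun x' _ => Finset.sum_congr rfl fun x _ => eV x' x]
        simp only [Finset.sum_add_distrib]
        rw [z1, z2, z3, z4]
      · refine Finset.sum_congr rfl fun x _ => ?_
        rw [div_self (div_pos (hp x) (hpωpos _)).ne', mul_one]
    have pointwise : ∀ x' x : X1 × X2 × X3,
        (if x' = x then 0 else ((if x'.2 = x.2 then K1 x'.1 x.1 else 0) + (if x'.2.2 = x.2.2 then K2 (x'.1, x'.2.1) (x.1, x.2.1) else 0)) * p x') - (if x' = x then 0 else ((if x'.2 = x.2 then K1 x'.1 x.1 else 0) + (if x'.2.2 = x.2.2 then K2 (x'.1, x'.2.1) (x.1, x.2.1) else 0)) * p x' * ((p x / pω (x.1, x.2.1)) / (p x' / pω (x'.1, x'.2.1)))) ≤ ((if x'.2 = x.2 then K1 x'.1 x.1 else 0) + (if x'.2.2 = x.2.2 then K2 (x'.1, x'.2.1) (x.1, x.2.1) else 0)) * p x' * (Real.log (p x' / pω (x'.1, x'.2.1)) - Real.log (p x / pω (x.1, x.2.1)))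 := by
      intro x' x
      by_cases hd : x' = x
      · subst hd; simp
      · rw [if_neg hd, if_neg hd]
        have hk1 : 0 ≤ (if x'.2 = x.2 then K1 x'.1 x.1 else 0) := by
          by_cases hb : x'.2 = x.2
          · rw [if_pos hb]; exact h1off _ _ (fun h => hd (Prod.ext h hb))
          · rw [if_neg hb]
        have hk2 : 0 ≤ (if x'.2.2 = x.2.2 then K2 (x'.1, x'.2.1) (x.1, x.2.1) else 0) := by
          by_cases hc : x'.2.2 = x.2.2
          · rw [if_pos hc]
            refine h2off _ _ (fun h => hd ?_)
            have h1 : x'.1 = x.1 := by rw [show x'.1 = (x'.1, x'.2.1).1 from rfl, h]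
            have h2 : x'.2.1 = x.2.1 := by rw [show x'.2.1 = (x'.1, x'.2.1).2 from rfl, h]
            exact Prod.ext h1 (Prod.ext h2 hc)
          · rw [if_neg hc]
        exact core2 _ (p x') _ _ (add_nonneg hk1 hk2) (hp x')
          (div_pos (hp x) (hpωpos _)) (div_pos (hp x') (hpωpos _))
    refine le_trans (le_of_eq ?_)
      (Finset.sum_le_sum fun x' _ => Finset.sum_le_sum fun x _ => pointwise x' x)
    symm
    simp only [Finset.sum_sub_distrib]
    rw [FB, sub_self]
  · -- third conjunct : B ≥ 0
    rw [Rrew _ p (fun x => Real.log (pω (x.1, x.2.1) / p1 x.1)) row1]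
    have FB : (∑ x' : X1 × X2 × X3, ∑ x : X1 × X2 × X3, if x' = x then 0 else (if x'.2 = x.2 then K1 x'.1 x.1 else 0) * p x')
        = ∑ x' : X1 × X2 × X3, ∑ x : X1 × X2 × X3, if x' = x then 0 else (if x'.2 = x.2 then K1 x'.1 x.1 else 0) * p x' * ((pω (x.1, x.2.1) / p1 x.1) / (pω (x'.1, x'.2.1) / p1 x'.1)) := by
      rw [split_diag, split_diag]
      congr 1
      · have z1 : (∑ x' : X1 × X2 × X3, ∑ x : X1 × X2 × X3, (if x'.2 = x.2 then K1 x'.1 x.1 else 0) * p x') = 0 :=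
          ZL1 K1 h1row _ (fun x' _ => p x') p1 (fun _ _ => rfl) (fun a' _ => hmargy a')
        have z2 : (∑ x' : X1 × X2 × X3, ∑ x : X1 × X2 × X3, (if x'.2 = x.2 then K1 x'.1 x.1 else 0) * p x' * ((pω (x.1, x.2.1) / p1 x.1) / (pω (x'.1, x'.2.1) / p1 x'.1))) = 0 := by
          have e : ∀ x' x : X1 × X2 × X3, (if x'.2 = x.2 then K1 x'.1 x.1 else 0) * p x' * ((pω (x.1, x.2.1) / p1 x.1) / (pω (x'.1, x'.2.1) / p1 x'.1)) = (if x'.2 = x.2 then K1 x'.1 x.1 else 0) * (p x' * ((pω (x.1, x.2.1) / p1 x.1) / (pω (x'.1, x'.2.1) / p1 x'.1))) :=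
            fun _ _ => mul_assoc _ _ _
          rw [Finset.sum_congr rfl fun x' _ => Finset.sum_congr rfl fun x _ => e x' x]
          exact ZL1 K1 h1row _
            (fun x' a => p x' * ((pω (a, x'.2.1) / p1 a) / (pω (x'.1, x'.2.1) / p1 x'.1)))
            p1 (fun _ _ => rfl) (fun a' a => MB a' a)
        rw [z1, z2]
      · refine Finset.sum_congr rfl fun x _ => ?_
        rw [div_self (div_pos (hpωpos _) (hp1pos _)).ne', mul_one]
    have pointwise : ∀ x' x : X1 × X2 × X3,
        (if x' = x then 0 else (if x'.2 = x.2 then K1 x'.1 x.1 else 0) * p x') - (if x' = x then 0 else (if x'.2 = x.2 then K1 x'.1 x.1 else 0) * p x' * ((pω (x.1, x.2.1) / p1 x.1) / (pω (x'.1, x'.2.1) / p1 x'.1))) ≤ (if x'.2 = x.2 then K1 x'.1 x.1 else 0) * p x' * (Real.log (pω (x'.1, x'.2.1) / p1 x'.1) - Real.log (pω (x.1, x.2.1) / p1 x.1)) := by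
      intro x' x
      by_cases hd : x' = x
      · subst hd; simp
      · rw [if_neg hd, if_neg hd]
        have hk : 0 ≤ (if x'.2 = x.2 then K1 x'.1 x.1 else 0) := by
          by_cases hb : x'.2 = x.2
          · rw [if_pos hb]; exact h1off _ _ (fun h => hd (Prod.ext h hb))
          · rw [if_neg hb]
        exact core2 _ (p x') _ _ hk (hp x')
          (div_pos (hpωpos _) (hp1pos _)) (div_pos (hpωpos _) (hp1pos _))
    refine le_trans (le_of_eq ?_)
      (Finset.sum_le_sum fun x' _ => Finset.sum_le_sum fun x _ => pointwise x' x)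
    symm
    simp only [Finset.sum_sub_distrib]
    rw [FB, sub_self]
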